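/- arXiv:2508.19052 — 3 statements merged into one kernel-verified Lean document; each statement's English description precedes it below -/
import Mathlib

section
/- Let α > 0 and Δt > 0. Suppose the simple 1-layer GNN output M equals the first-order finite-volume update F at node 1 of each of the training graphs G(0,0,0,0), G(1,1,0,0), G(0,0,1,1) and G(0,1,0,0). Then W1 = 1, W3 = 1, W2·w_agg = 1 (in particular W2 ≠ 0), and (Δt/√3)·W2·b_agg + b_u = 0. -/
/-- First-order finite-volume update at node 1 of the two-cell training graph
`G(T1,T2,S1,S2)`: both cells are equilateral triangles of side 2, so the volume is
`V = √3`, the face area is `A = 2` and the centroid distance is `δ = 2/√3`. -/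
noncomputable def trainFV (Δt α T1 T2 S1 : ℝ) : ℝ :=
  T1 + (Δt / Real.sqrt 3) * (α * (2 / (2 / Real.sqrt 3)) * (T2 - T1)) + Δt * S1

/-- Simple 1-layer GNN output at node 1 of the two-cell training graph `G(T1,T2,S1,S2)`:
`M = W1·T1 + W2·(Δt/V)·(w_agg·β + b_agg) + W3·Δt·S1 + b_u` with
`β = α·(A/δ)·(T2 − T1)`, `V = √3`, `A = 2`, `δ = 2/√3`. -/
noncomputable def trainGNN (W1 W2 W3 bu wagg bagg Δt α T1 T2 S1 : ℝ) : ℝ :=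
  W1 * T1 +
    W2 * (Δt / Real.sqrt 3) * (wagg * (α * (2 / (2 / Real.sqrt 3)) * (T2 - T1)) + bagg) +
    W3 * (Δt * S1) + bu

/-- If the simple 1-layer GNN agrees exactly with the first-order
finite-volume update at node 1 of the training graphs `G(0,0,0,0)`, `G(1,1,0,0)`,
`G(0,0,1,1)` and `G(0,1,0,0)`, then `W1 = 1`, `W3 = 1`, `W2·w_agg = 1` (so `W2 ≠ 0`)
and `(Δt/√3)·W2·b_agg + b_u = 0`. -/
theorem gnn_weights_identified (Δt α W1 W2 W3 bu wagg bagg : ℝ)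
    (hΔt : 0 < Δt) (hα : 0 < α)
    (h0000 : trainGNN W1 W2 W3 bu wagg bagg Δt α 0 0 0 = trainFV Δt α 0 0 0)
    (h1100 : trainGNN W1 W2 W3 bu wagg bagg Δt α 1 1 0 = trainFV Δt α 1 1 0)
    (h0011 : trainGNN W1 W2 W3 bu wagg bagg Δt α 0 0 1 = trainFV Δt α 0 0 1)
    (h0100 : trainGNN W1 W2 W3 bu wagg bagg Δt α 0 1 0 = trainFV Δt α 0 1 0) :
    W1 = 1 ∧ W3 = 1 ∧ W2 * wagg = 1 ∧ W2 ≠ 0 ∧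
      (Δt / Real.sqrt 3) * W2 * bagg + bu = 0 := by
  have hs : Real.sqrt 3 ≠ 0 := by positivity
  have hs2 : Real.sqrt 3 * Real.sqrt 3 = 3 := Real.mul_self_sqrt (by norm_num)
  unfold trainGNN trainFV at *
  have hconst : W2 * (Δt / Real.sqrt 3) * bagg + bu = 0 := by
    field_simp at h0000 ⊢
    linarith
  have hW1 : W1 = 1 := by nlinarith [h1100, hconst]
  have hW3 : W3 = 1 := by nlinarith [h0011, hconst]
  have hW2 : W2 * wagg = 1 := by
    have h := h0100
    field_simp at h
    have hc : W2 * Δt * bagg + bu * Real.sqrt 3 = 0 := by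
      have h2 := hconst
      field_simp at h2
      linarith
    have hpos : (0:ℝ) < Δt * α * Real.sqrt 3 := by positivity
    have key : (W2 * wagg) * (Δt * α * Real.sqrt 3) = 1 * (Δt * α * Real.sqrt 3) := by
      linear_combination h - hc
    exact mul_right_cancel₀ hpos.ne' key
  refine ⟨hW1, hW3, hW2, ?_, by linarith [hconst]⟩
  intro h0; rw [h0, zero_mul] at hW2; norm_num at hW2
end

section
/- Let Δt > 0, α = 1 and ε > 0. Suppose the simple 1-layer GNN satisfies |M − F| ≤ ε at node 1 of each of the training graphs G(0,0,0,0), G(1,1,0,0), G(0,0,1,1) and G(0,1,0,0), where F is the first-order finite-volume update. Then |(Δt/√3)·W2·b_agg + b_u| ≤ ε, |1 − W1| ≤ 2ε, Δt·|1 − W3| ≤ 2ε, and Δt·|1 − W2·w_agg| ≤ 2ε. -/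
/-- If the simple 1-layer GNN is `ε`-close to the first-order
finite-volume update at node 1 of the training graphs `G(0,0,0,0)`, `G(1,1,0,0)`,
`G(0,0,1,1)` and `G(0,1,0,0)` (with `α = 1`), then
`|(Δt/√3)·W2·b_agg + b_u| ≤ ε`, `|1 − W1| ≤ 2ε`, `Δt·|1 − W3| ≤ 2ε` and
`Δt·|1 − W2·w_agg| ≤ 2ε`. -/
theorem gnn_weights_eps_identified (Δt α ε W1 W2 W3 bu wagg bagg : ℝ)
    (hΔt : 0 < Δt) (hα : α = 1) (hε : 0 < ε)
    (h0000 : |trainGNN W1 W2 W3 bu wagg bagg Δt α 0 0 0 - trainFV Δt α 0 0 0| ≤ ε)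
    (h1100 : |trainGNN W1 W2 W3 bu wagg bagg Δt α 1 1 0 - trainFV Δt α 1 1 0| ≤ ε)
    (h0011 : |trainGNN W1 W2 W3 bu wagg bagg Δt α 0 0 1 - trainFV Δt α 0 0 1| ≤ ε)
    (h0100 : |trainGNN W1 W2 W3 bu wagg bagg Δt α 0 1 0 - trainFV Δt α 0 1 0| ≤ ε) :
    |(Δt / Real.sqrt 3) * W2 * bagg + bu| ≤ ε ∧
      |1 - W1| ≤ 2 * ε ∧
      Δt * |1 - W3| ≤ 2 * ε ∧
      Δt * |1 - W2 * wagg| ≤ 2 * ε := by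
  subst hα
  have h3 : Real.sqrt 3 > 0 := Real.sqrt_pos.mpr (by norm_num)
  have hs : (2 : ℝ) / (2 / Real.sqrt 3) = Real.sqrt 3 := by
    field_simp
  have hd : Δt / Real.sqrt 3 * Real.sqrt 3 = Δt := div_mul_cancel₀ _ (ne_of_gt h3)
  simp only [trainGNN, trainFV, hs] at h0000 h1100 h0011 h0100
  set c := Δt / Real.sqrt 3 with hc
  have e0 : W2 * c * (wagg * (1 * Real.sqrt 3 * (0 - 0)) + bagg) = c * W2 * bagg := by ring
  rw [abs_le] at h0000 h1100 h0011 h0100 ⊢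
  constructor
  · constructor <;> nlinarith [h0000.1, h0000.2]
  refine ⟨?_, ?_, ?_⟩
  · rw [abs_le]; constructor <;> nlinarith [h0000.1, h0000.2, h1100.1, h1100.2]
  · rw [show Δt * |1 - W3| = |Δt * (1 - W3)| by rw [abs_mul, abs_of_pos hΔt], abs_le]
    constructor <;> nlinarith [h0000.1, h0000.2, h0011.1, h0011.2]
  · rw [show Δt * |1 - W2 * wagg| = |Δt * (1 - W2 * wagg)| by rw [abs_mul, abs_of_pos hΔt], abs_le]
    have h1 : c * Real.sqrt 3 = Δt := hd
    constructor <;> nlinarith [h0000.1, h0000.2, h0100.1, h0100.2, h1]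
end

section
/- (Exact sparse implementation of the finite-volume scheme.) Let L ≥ 1, m ≥ 2, d ≥ 2, Δt > 0 and α > 0. There exists a weight assignment θ for the (L,m,d) message-passing network with all biases equal to zero and with exactly ‖θ‖_0 = 2m(L+1)+4 nonzero parameters, such that for every graph — i.e. every finite collection of cells P with volumes V_P > 0, sources S_P ∈ ℝ, temperatures T_P ∈ ℝ, finite neighbour sets N(P), face areas A_{PN} > 0 and centroid distances δ_{PN} > 0 — and every node P, the network output equals the first-order finite-volume update: M_θ(G)_P = F(G)_P. -/
/-- Entrywise ReLU on a real vector. -/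
def relu {d : ℕ} (v : Fin d → ℝ) : Fin d → ℝ := fun i => max (v i) 0

/-- Number of nonzero entries of a real matrix. -/
noncomputable def matNnz {a b : ℕ} (M : Matrix (Fin a) (Fin b) ℝ) : ℕ :=
  (Finset.univ.filter fun p : Fin a × Fin b => M p.1 p.2 ≠ 0).card

/-- Number of nonzero entries of a real vector. -/
noncomputable def vecNnz {a : ℕ} (v : Fin a → ℝ) : ℕ :=
  (Finset.univ.filter fun i : Fin a => v i ≠ 0).card

/-- An `m`-layer MLP of width `d`, input dimension `k`, scalar output:
`x ↦ Wₘ·σ(…σ(W₂·σ(W₁·x + c₁) + c₂)…) + cₘ`, with `W₁ ∈ ℝ^{d×k}`,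
`W₂,…,W_{m−1} ∈ ℝ^{d×d}`, `Wₘ ∈ ℝ^{1×d}`, bias vectors `c₁,…,c_{m−1} ∈ ℝ^d`
and scalar bias `cₘ`; ReLU after every sublayer except the last. -/
structure MLP (k m d : ℕ) where
  first : Matrix (Fin d) (Fin k) ℝ
  biasFirst : Fin d → ℝ
  mid : Fin (m - 2) → Matrix (Fin d) (Fin d) ℝ
  biasMid : Fin (m - 2) → Fin d → ℝ
  last : Matrix (Fin 1) (Fin d) ℝ
  biasLast : ℝ

/-- Evaluation of an MLP. -/
noncomputable def MLP.eval {k m d : ℕ} (f : MLP k m d) (x : Fin k → ℝ) : ℝ :=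
  (f.last.mulVec
    ((List.finRange (m - 2)).foldl
      (fun v i => relu ((f.mid i).mulVec v + f.biasMid i))
      (relu (f.first.mulVec x + f.biasFirst)))) 0 + f.biasLast

/-- Number of nonzero parameters (weights and biases) of an MLP. -/
noncomputable def MLP.nnz {k m d : ℕ} (f : MLP k m d) : ℕ :=
  matNnz f.first + vecNnz f.biasFirst +
    (∑ i, (matNnz (f.mid i) + vecNnz (f.biasMid i))) +
    matNnz f.last + (if f.biasLast ≠ 0 then 1 else 0)

/-- All biases of an MLP vanish. -/
def MLP.AllBiasesZero {k m d : ℕ} (f : MLP k m d) : Prop :=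
  f.biasFirst = 0 ∧ (∀ i, f.biasMid i = 0) ∧ f.biasLast = 0

/-- Weights of an `(L,m,d)` message-passing network: for each layer an aggregation
MLP (input dimension 1) and an update MLP (input dimension 3). -/
structure MPSWeights (L m d : ℕ) where
  agg : Fin L → MLP 1 m d
  up : Fin L → MLP 3 m d

/-- Total number of nonzero parameters `‖θ‖₀` of a message-passing network. -/
noncomputable def MPSWeights.nnz {L m d : ℕ} (θ : MPSWeights L m d) : ℕ :=
  ∑ l, ((θ.agg l).nnz + (θ.up l).nnz)

/-- A finite-volume graph: cells with volumes, sources, temperatures, neighbour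
sets, face areas and centroid distances. -/
structure HeatGraph (ι : Type) where
  vol : ι → ℝ
  S : ι → ℝ
  T : ι → ℝ
  nbr : ι → Finset ι
  faceA : ι → ι → ℝ
  dist : ι → ι → ℝ

/-- Geometric validity: positive volumes, face areas and centroid distances. -/
def HeatGraph.Valid {ι : Type} (G : HeatGraph ι) : Prop :=
  (∀ P, 0 < G.vol P) ∧ ∀ P, ∀ j ∈ G.nbr P, 0 < G.faceA P j ∧ 0 < G.dist P j

/-- First-order finite-volume update at node `P` of a graph:
`F_P = T_P + (Δt/V_P)·Σ_{j∈N(P)} α·(A_{Pj}/δ_{Pj})·(T_j − T_P) + Δt·S_P`. -/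
noncomputable def fvUpdate {ι : Type} (Δt α : ℝ) (G : HeatGraph ι) (P : ι) : ℝ :=
  G.T P + (Δt / G.vol P) * ∑ j ∈ G.nbr P, α * (G.faceA P j / G.dist P j) * (G.T j - G.T P)
    + Δt * G.S P

/-- Node states of the message-passing network: `h_P⁰ = T_P` and
`h_P^l = u_l([h_P^{l−1}, (Δt/V_P)·Σ_{N∈N(P)} g_l(α·(A_{PN}/δ_{PN})·(h_N^{l−1} − h_P^{l−1})), Δt·S_P])`. -/
noncomputable def nodeState {ι : Type} {L m d : ℕ} (θ : MPSWeights L m d) (Δt α : ℝ)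
    (G : HeatGraph ι) : ℕ → ι → ℝ
  | 0, P => G.T P
  | l + 1, P =>
    if h : l < L then
      (θ.up ⟨l, h⟩).eval
        ![nodeState θ Δt α G l P,
          (Δt / G.vol P) *
            ∑ N ∈ G.nbr P,
              (θ.agg ⟨l, h⟩).eval fun _ =>
                α * (G.faceA P N / G.dist P N) *
                  (nodeState θ Δt α G l N - nodeState θ Δt α G l P),
          Δt * G.S P]
    else nodeState θ Δt α G l P

/-- Output of the `(L,m,d)` message-passing network at node `P`: `M_θ(G)_P = h_P^L`. -/
noncomputable def mpsOutput {ι : Type} {L m d : ℕ} (θ : MPSWeights L m d) (Δt α : ℝ)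
    (G : HeatGraph ι) (P : ι) : ℝ :=
  nodeState θ Δt α G L P


/-!
Since `c = relu c - relu (-c)`, a scalar `c` passes exactly through ReLU layers as the pair
`(relu c, relu (-c))` on two neurons: the first matrix `(1, -1, 0, …)ᵀ w` produces it from
`c = w ⬝ᵥ x`, each middle layer copies it with a two-entry diagonal, and the last row
`(1, -1, 0, …)` reads `c` off. So a bias-free MLP realizes any linear form `w` with
`2‖w‖₀ + 2(m - 2) + 2` nonzero weights. In the first layer the aggregation MLP is the identity
(`2m` weights) and the update MLP sums its three inputs (`2m + 4` weights), which is already the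
finite-volume update; each of the other `L - 1` layers has zero aggregation and an update that
projects onto the state (`2m` weights), giving `‖θ‖₀ = 2m(L + 1) + 4`.
-/

namespace FV

open Matrix

def signPair (d : ℕ) : Fin d → ℝ :=
  fun i => if (i : ℕ) = 0 then 1 else if (i : ℕ) = 1 then -1 else 0

def firstTwo (d : ℕ) : Fin d → ℝ := fun i => if (i : ℕ) < 2 then 1 else 0

lemma vecNnz_eq_card_filter_val_lt_two {d : ℕ} {v : Fin d → ℝ}
    (hv : ∀ i, v i ≠ 0 ↔ (i : ℕ) < 2) (hd : 2 ≤ d) : vecNnz v = 2 := by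
  simp only [vecNnz, hv, Fin.card_filter_val_lt]
  omega

lemma vecNnz_signPair {d : ℕ} (hd : 2 ≤ d) : vecNnz (signPair d) = 2 :=
  vecNnz_eq_card_filter_val_lt_two (fun i => by unfold signPair; split_ifs <;> simp <;> omega) hd

lemma vecNnz_firstTwo {d : ℕ} (hd : 2 ≤ d) : vecNnz (firstTwo d) = 2 :=
  vecNnz_eq_card_filter_val_lt_two (fun i => by unfold firstTwo; split_ifs <;> simp_all) hd

lemma relu_smul_signPair_apply {d : ℕ} (c : ℝ) (i : Fin d) :
    relu (c • signPair d) i =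
      if (i : ℕ) = 0 then max c 0 else if (i : ℕ) = 1 then max (-c) 0 else 0 := by
  simp only [relu, Pi.smul_apply, smul_eq_mul, signPair]
  split_ifs <;> simp

lemma relu_diagonal_firstTwo_mulVec {d : ℕ} (c : ℝ) :
    relu (diagonal (firstTwo d) *ᵥ relu (c • signPair d)) = relu (c • signPair d) := by
  ext i
  rw [relu, mulVec_diagonal, relu_smul_signPair_apply, firstTwo]
  split_ifs <;> first | omega | simp

lemma signPair_dotProduct_relu {d : ℕ} (hd : 2 ≤ d) (c : ℝ) :
    signPair d ⬝ᵥ relu (c • signPair d) = c := by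
  obtain ⟨d, rfl⟩ : ∃ d', d = d' + 2 := ⟨d - 2, by omega⟩
  simp [dotProduct, Fin.sum_univ_succ, relu_smul_signPair_apply, signPair, ← sub_eq_add_neg]

end FV

section Nnz

open Matrix

lemma vecNnz_zero {a : ℕ} : vecNnz (0 : Fin a → ℝ) = 0 := by
  simp [vecNnz]

lemma matNnz_zero {a b : ℕ} : matNnz (0 : Matrix (Fin a) (Fin b) ℝ) = 0 := by
  simp [matNnz]

lemma matNnz_vecMulVec {a b : ℕ} (u : Fin a → ℝ) (v : Fin b → ℝ) :
    matNnz (vecMulVec u v) = vecNnz u * vecNnz v := by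
  rw [matNnz, vecNnz, vecNnz, ← Finset.card_product]
  congr 1
  ext ⟨i, j⟩
  simp [vecMulVec_apply]

lemma matNnz_diagonal {a : ℕ} (v : Fin a → ℝ) : matNnz (diagonal v) = vecNnz v := by
  have hsupp : (Finset.univ.filter fun p : Fin a × Fin a => diagonal v p.1 p.2 ≠ 0) =
      (Finset.univ.filter fun i => v i ≠ 0).image fun i => (i, i) := by
    ext ⟨i, j⟩
    by_cases hij : i = j
    · subst hij; simp
    · simp [hij, Ne.symm hij]
  rw [matNnz, hsupp, Finset.card_image_of_injective _ fun i j h => congrArg Prod.fst h, vecNnz]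

lemma matNnz_replicateRow {a b : ℕ} (v : Fin b → ℝ) :
    matNnz (replicateRow (Fin a) v) = a * vecNnz v := by
  rw [matNnz, vecNnz]
  trans ((Finset.univ : Finset (Fin a)) ×ˢ Finset.univ.filter fun j => v j ≠ 0).card
  · exact congrArg Finset.card <| Finset.ext fun p => by
      rw [Finset.mem_filter, Finset.mem_product]
      simp [replicateRow]
  · simp

lemma vecNnz_const {a : ℕ} {c : ℝ} (hc : c ≠ 0) : vecNnz (fun _ : Fin a => c) = a := by
  simp [vecNnz, hc]

lemma vecNnz_single {a : ℕ} (i : Fin a) {c : ℝ} (hc : c ≠ 0) :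
    vecNnz (Pi.single i c) = 1 := by
  rw [vecNnz, Finset.card_eq_one]
  exact ⟨i, by ext j; by_cases h : j = i <;> simp [h, hc]⟩

end Nnz

namespace MLP

open Matrix FV

noncomputable def linear (m d : ℕ) {k : ℕ} (w : Fin k → ℝ) : MLP k m d where
  first := vecMulVec (signPair d) w
  biasFirst := 0
  mid := fun _ => diagonal (firstTwo d)
  biasMid := fun _ => 0
  last := replicateRow (Fin 1) (signPair d)
  biasLast := 0

instance {k m d : ℕ} : Zero (MLP k m d) := ⟨⟨0, 0, 0, 0, 0, 0⟩⟩

variable {k m d : ℕ}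

lemma linear_allBiasesZero (w : Fin k → ℝ) : (linear m d w).AllBiasesZero :=
  ⟨rfl, fun _ => rfl, rfl⟩

lemma zero_allBiasesZero : (0 : MLP k m d).AllBiasesZero :=
  ⟨rfl, fun _ => rfl, rfl⟩

lemma linear_eval (hd : 2 ≤ d) (w x : Fin k → ℝ) : (linear m d w).eval x = w ⬝ᵥ x := by
  simp only [eval, linear, add_zero]
  rw [vecMulVec_mulVec, op_smul_eq_smul,
    List.foldl_fixed' fun _ => relu_diagonal_firstTwo_mulVec (w ⬝ᵥ x),
    replicateRow_mulVec_eq_const, Function.const_apply, signPair_dotProduct_relu hd]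

lemma linear_nnz (hd : 2 ≤ d) (w : Fin k → ℝ) :
    (linear m d w).nnz = 2 * vecNnz w + 2 * (m - 2) + 2 := by
  simp only [nnz, linear, matNnz_vecMulVec, matNnz_diagonal, matNnz_replicateRow,
    vecNnz_signPair hd, vecNnz_firstTwo hd, vecNnz_zero, Finset.sum_const,
    Finset.card_univ, Fintype.card_fin, smul_eq_mul, ne_eq, not_true_eq_false, if_false]
  ring

lemma zero_nnz : (0 : MLP k m d).nnz = 0 := by
  simp [nnz, show (0 : MLP k m d) = ⟨0, 0, 0, 0, 0, 0⟩ from rfl, matNnz_zero, vecNnz_zero]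

end MLP

section Network

variable {ι : Type} {L m d : ℕ} (Δt α : ℝ) (G : HeatGraph ι)

lemma nodeState_succ_of_up_eval_eq_head (θ : MPSWeights L m d) (i : Fin L)
    (hup : ∀ x, (θ.up i).eval x = x 0) (P : ι) :
    nodeState θ Δt α G (i + 1) P = nodeState θ Δt α G i P := by
  rw [nodeState, dif_pos i.isLt, Fin.eta, hup, Matrix.cons_val_zero]

lemma nodeState_one_eq_fvUpdate {θ : MPSWeights (L + 1) m d}
    (hagg : ∀ x, (θ.agg 0).eval x = x 0) (hup : ∀ x, (θ.up 0).eval x = x 0 + x 1 + x 2)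
    (P : ι) :
    nodeState θ Δt α G 1 P = fvUpdate Δt α G P := by
  rw [nodeState, dif_pos L.succ_pos, Fin.mk_zero, hup]
  simp only [hagg, nodeState, fvUpdate, Matrix.cons_val_zero, Matrix.cons_val_one,
    Matrix.cons_val_two, Matrix.head_cons, Matrix.tail_cons]

end Network

noncomputable def fvWeights (L m d : ℕ) : MPSWeights (L + 1) m d where
  agg := Fin.cons (MLP.linear m d 1) fun _ => 0
  up := Fin.cons (MLP.linear m d 1) fun _ => MLP.linear m d (Pi.single 0 1)

section FvWeights

open Matrix

variable {L m d : ℕ}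

lemma fvWeights_allBiasesZero (l : Fin (L + 1)) :
    ((fvWeights L m d).agg l).AllBiasesZero ∧ ((fvWeights L m d).up l).AllBiasesZero := by
  cases l using Fin.cases with
  | zero => exact ⟨MLP.linear_allBiasesZero _, MLP.linear_allBiasesZero _⟩
  | succ => exact ⟨MLP.zero_allBiasesZero, MLP.linear_allBiasesZero _⟩

lemma fvWeights_nnz (hm : 2 ≤ m) (hd : 2 ≤ d) :
    (fvWeights L m d).nnz = 2 * m * (L + 2) + 4 := by
  simp only [MPSWeights.nnz, Fin.sum_univ_succ, fvWeights, Fin.cons_zero, Fin.cons_succ,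
    MLP.zero_nnz, MLP.linear_nnz hd, Pi.one_def, vecNnz_const one_ne_zero,
    vecNnz_single _ one_ne_zero, Finset.sum_const, Finset.card_univ, Fintype.card_fin, smul_eq_mul]
  obtain ⟨m, rfl⟩ : ∃ m', m = m' + 2 := ⟨m - 2, by omega⟩
  rw [Nat.add_sub_cancel]
  ring

lemma nodeState_fvWeights (hd : 2 ≤ d) (Δt α : ℝ) {ι : Type} (G : HeatGraph ι) :
    ∀ l ≤ L, ∀ P, nodeState (fvWeights L m d) Δt α G (l + 1) P = fvUpdate Δt α G P
  | 0, _, P => nodeState_one_eq_fvUpdate Δt α G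
      (fun x => by simp [fvWeights, MLP.linear_eval hd, one_dotProduct])
      (fun x => by simp [fvWeights, MLP.linear_eval hd, one_dotProduct, Fin.sum_univ_three]) P
  | l + 1, hl, P => by
    rw [← nodeState_fvWeights hd Δt α G l (by omega) P]
    exact nodeState_succ_of_up_eval_eq_head Δt α G _ (Fin.succ ⟨l, by omega⟩)
      (fun x => by simp only [fvWeights, Fin.cons_succ, MLP.linear_eval hd, single_dotProduct,
        one_mul]) P

end FvWeights

theorem exists_sparse_exact_fv_implementation_general (L m d : ℕ) (hL : 1 ≤ L) (hm : 2 ≤ m)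
    (hd : 2 ≤ d) (Δt α : ℝ) :
    ∃ θ : MPSWeights L m d,
      (∀ l, (θ.agg l).AllBiasesZero ∧ (θ.up l).AllBiasesZero) ∧
      θ.nnz = 2 * m * (L + 1) + 4 ∧
      ∀ (ι : Type) (G : HeatGraph ι), G.Valid →
        ∀ P : ι, mpsOutput θ Δt α G P = fvUpdate Δt α G P := by
  obtain ⟨L, rfl⟩ : ∃ L', L = L' + 1 := ⟨L - 1, by omega⟩
  exact ⟨fvWeights L m d, fvWeights_allBiasesZero, fvWeights_nnz hm hd,
    fun _ G _ P => nodeState_fvWeights hd Δt α G L le_rfl P⟩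

/-- **Exact sparse implementation of the finite-volume scheme.**
For `L ≥ 1`, `m ≥ 2`, `d ≥ 2`, `Δt > 0`, `α > 0`, there is a weight assignment `θ`
with all biases zero and exactly `‖θ‖₀ = 2m(L+1)+4` nonzero parameters such that on
every (geometrically valid) graph and every node, the network output equals the
first-order finite-volume update. -/
theorem exists_sparse_exact_fv_implementation (L m d : ℕ) (hL : 1 ≤ L) (hm : 2 ≤ m)
    (hd : 2 ≤ d) (Δt α : ℝ) (hΔt : 0 < Δt) (hα : 0 < α) :
    ∃ θ : MPSWeights L m d,
      (∀ l, (θ.agg l).AllBiasesZero ∧ (θ.up l).AllBiasesZero) ∧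
      θ.nnz = 2 * m * (L + 1) + 4 ∧
      ∀ (ι : Type) (G : HeatGraph ι), G.Valid →
        ∀ P : ι, mpsOutput θ Δt α G P = fvUpdate Δt α G P :=
  exists_sparse_exact_fv_implementation_general L m d hL hm hd Δt α
end
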